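/- An unstable A-module is reduced (i.e. the map Sq_0: x ↦ Sq^{|x|} x is injective) if and only if it contains no non-trivial nilpotent unstable A-submodule. -/

import Mathlib

/-!
Common preamble: the mod 2 Steenrod algebra `SteenrodAlgebra` (defined by generators
`Sq i` and the Adem relations), the category `U` of unstable modules over it
(`UnstableModule`, `UnstableHom`), the polynomial algebra `H^*V` for `V` an elementary
abelian 2-group of rank `d` (`HVSetup`), the category `H^*V-U` of unstable
`H^*V`-`A`-modules (`HVModule`, `HVHom`), and the various notions used in the paper
(nilpotent, reduced, nil-closed, injectives, injective hulls, Brown-Gitler modules,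
tensor products, direct sums, the functor `Fix`, bar quotients `Ē = F_2 ⊗_{H^*V} E`, …).
-/

noncomputable section

/-- The Adem relations (together with `Sq⁰ = 1`) on the free `ZMod 2`-algebra
generated by symbols `Sq i`, `i : ℕ`. -/
inductive AdemRel : FreeAlgebra (ZMod 2) ℕ → FreeAlgebra (ZMod 2) ℕ → Prop
  | adem (a b : ℕ) (ha : 0 < a) (hab : a < 2 * b) :
      AdemRel (FreeAlgebra.ι (ZMod 2) a * FreeAlgebra.ι (ZMod 2) b)
        (∑ c ∈ Finset.range (a / 2 + 1),
          ((Nat.choose (b - c - 1) (a - 2 * c) : ZMod 2)) •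
            (FreeAlgebra.ι (ZMod 2) (a + b - c) * FreeAlgebra.ι (ZMod 2) c))
  | unit : AdemRel (FreeAlgebra.ι (ZMod 2) 0) 1

/-- The mod 2 Steenrod algebra `A`. -/
abbrev SteenrodAlgebra : Type := RingQuot AdemRel

/-- The Steenrod squares `Sq i ∈ A`. -/
def Sq (i : ℕ) : SteenrodAlgebra :=
  RingQuot.mkAlgHom (ZMod 2) AdemRel (FreeAlgebra.ι (ZMod 2) i)

/-- An unstable module over the mod 2 Steenrod algebra: a graded `ZMod 2`-vector space
with a compatible `A`-action such that `Sq i` raises degrees by `i` and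
`Sq i x = 0` whenever `i > |x|` (the instability condition).  Objects of `U`. -/
structure UnstableModule : Type 1 where
  carrier : Type
  [acg : AddCommGroup carrier]
  [modA : Module SteenrodAlgebra carrier]
  [modF : Module (ZMod 2) carrier]
  [tower : IsScalarTower (ZMod 2) SteenrodAlgebra carrier]
  grading : ℕ → Submodule (ZMod 2) carrier
  isInternal : DirectSum.IsInternal grading
  sq_mem : ∀ (i n : ℕ) (x : carrier), x ∈ grading n → Sq i • x ∈ grading (n + i)
  instability : ∀ (i n : ℕ) (x : carrier), x ∈ grading n → n < i → Sq i • x = 0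

attribute [instance] UnstableModule.acg UnstableModule.modA UnstableModule.modF
  UnstableModule.tower

/-- Morphisms of `U`: `A`-linear maps of degree zero. -/
structure UnstableHom (M N : UnstableModule) where
  toFun : M.carrier →ₗ[SteenrodAlgebra] N.carrier
  map_grading : ∀ (n : ℕ) (x : M.carrier), x ∈ M.grading n → toFun x ∈ N.grading n

/-- Composition of morphisms of `U`. -/
def UnstableHom.comp {M N P : UnstableModule} (g : UnstableHom N P) (f : UnstableHom M N) :
    UnstableHom M P :=
  ⟨g.toFun.comp f.toFun, fun n x hx => g.map_grading n _ (f.map_grading n x hx)⟩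

/-- The identity morphism of `U`. -/
def UnstableHom.id (M : UnstableModule) : UnstableHom M M :=
  ⟨LinearMap.id, fun _ _ h => h⟩

/-- `M ≅ N` in the category `U`. -/
def UIso (M N : UnstableModule) : Prop :=
  ∃ (f : UnstableHom M N) (g : UnstableHom N M),
    (∀ x, g.toFun (f.toFun x) = x) ∧ ∀ y, f.toFun (g.toFun y) = y

/-- `sq0Iter M k n x` is the `k`-fold iterate of `Sq₀ : x ↦ Sq^{|x|} x` on an element
`x` of degree `n` (whose `j`-th iterate has degree `2^j * n`). -/
def sq0Iter (M : UnstableModule) : ℕ → ℕ → M.carrier → M.carrier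
  | 0, _, x => x
  | k + 1, n, x => Sq (2 ^ k * n) • sq0Iter M k n x

/-- An unstable module is nilpotent if every (homogeneous) element is killed by some
iterate of `Sq₀`. -/
def IsNilpotentU (M : UnstableModule) : Prop :=
  ∀ (n : ℕ) (x : M.carrier), x ∈ M.grading n → ∃ k, sq0Iter M k n x = 0

/-- An unstable module is reduced if `Sq₀ : x ↦ Sq^{|x|} x` is injective. -/
def IsReducedU (M : UnstableModule) : Prop :=
  ∀ (n : ℕ) (x : M.carrier), x ∈ M.grading n → Sq n • x = 0 → x = 0

/-- An unstable module is nil-closed if it is reduced and `Ker Sq₁ = Im Sq₀`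
(on homogeneous elements, `Sq₁ x = Sq^{|x|-1} x` and `Sq₀ y = Sq^{|y|} y`). -/
def IsNilClosedU (M : UnstableModule) : Prop :=
  IsReducedU M ∧
  ∀ (n : ℕ) (x : M.carrier), x ∈ M.grading n →
    (Sq (n - 1) • x = 0 ↔ ∃ (m : ℕ) (y : M.carrier), y ∈ M.grading m ∧ Sq m • y = x)

/-- A graded submodule: an `A`-submodule spanned by its homogeneous elements. -/
def IsGradedSub (M : UnstableModule) (p : Submodule SteenrodAlgebra M.carrier) : Prop :=
  ∀ x ∈ p, x ∈ Submodule.span (ZMod 2)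
    ((p : Set M.carrier) ∩ ⋃ n, ((M.grading n : Submodule (ZMod 2) M.carrier) : Set M.carrier))

/-- Injective objects of the category `U` (lifting property against monomorphisms). -/
def IsInjectiveU (I : UnstableModule) : Prop :=
  ∀ (M N : UnstableModule) (f : UnstableHom M N), Function.Injective f.toFun →
    ∀ g : UnstableHom M I, ∃ h : UnstableHom N I, ∀ x, h.toFun (f.toFun x) = g.toFun x

/-- `i : M ↪ E` exhibits `E` as the injective hull of `M` in `U`: `E` is injective,
`i` is injective, and the extension is essential (every non-trivial graded
`A`-submodule of `E` meets the image of `M` non-trivially). -/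
def IsInjectiveHullU (M E : UnstableModule) (i : UnstableHom M E) : Prop :=
  IsInjectiveU E ∧ Function.Injective i.toFun ∧
  ∀ p : Submodule SteenrodAlgebra E.carrier, IsGradedSub E p → p ≠ ⊥ →
    ∃ x, x ≠ 0 ∧ x ∈ p ∧ x ∈ Set.range i.toFun

/-- The Brown-Gitler module `J(n)`: it represents the functor `M ↦ (Mⁿ)^∨`, i.e.
there is a bijection `Hom_U(M, J(n)) ≅ Hom_{F_2}(Mⁿ, F_2)`, natural in `M`. -/
def IsBrownGitler (J : UnstableModule) (n : ℕ) : Prop :=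
  ∃ Φ : ∀ M : UnstableModule, UnstableHom M J → (↥(M.grading n) →ₗ[ZMod 2] ZMod 2),
    (∀ M, Function.Bijective (Φ M)) ∧
    ∀ (M M' : UnstableModule) (f : UnstableHom M' M) (g : UnstableHom M J)
      (x : ↥(M'.grading n)),
      Φ M' (g.comp f) x = Φ M g ⟨f.toFun x, f.map_grading n x x.2⟩

/-- `T` realizes the tensor product `M ⊗_{F_2} N` in `U` (with the Cartan formula
giving the `A`-action and the total grading). -/
def IsTensorOf (M N T : UnstableModule) : Prop :=
  ∃ β : M.carrier →ₗ[ZMod 2] N.carrier →ₗ[ZMod 2] T.carrier,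
    (∀ (m n : ℕ) (x : M.carrier) (y : N.carrier), x ∈ M.grading m → y ∈ N.grading n →
      β x y ∈ T.grading (m + n)) ∧
    (∀ (k : ℕ) (x : M.carrier) (y : N.carrier),
      Sq k • β x y = ∑ i ∈ Finset.range (k + 1), β (Sq i • x) (Sq (k - i) • y)) ∧
    Function.Bijective (TensorProduct.lift β)

/-- `I` is the direct sum (coproduct in `U`) of the family `F`. -/
def IsDirectSumOf (I : UnstableModule) {ι : Type} (F : ι → UnstableModule) : Prop :=
  letI := Classical.decEq ι
  ∃ j : ∀ i, UnstableHom (F i) I,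
    Function.Bijective
      (DirectSum.toModule SteenrodAlgebra ι I.carrier fun i => (j i).toFun)

/-- An indecomposable (non-trivial) object of `U`: its only idempotent endomorphisms
are `0` and the identity. -/
def IndecomposableU (L : UnstableModule) : Prop :=
  (∃ x : L.carrier, x ≠ 0) ∧
  ∀ e : UnstableHom L L, (∀ x, e.toFun (e.toFun x) = e.toFun x) →
    (∀ x, e.toFun x = 0) ∨ (∀ x, e.toFun x = x)

/-- `H^*V` for `V` an elementary abelian 2-group of rank `d`: a polynomial algebra
`F_2[t_1, …, t_d]` on generators of degree 1, with its unstable `A`-algebra structure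
(`Sq¹ t = t²` and the Cartan formula).  `cV` is the top Dickson invariant
`∏_{0 ≠ u ∈ H¹V} u`. -/
structure HVSetup (d : ℕ) : Type 1 where
  H : Type
  [ring : CommRing H]
  [modA : Module SteenrodAlgebra H]
  [modF : Module (ZMod 2) H]
  [tower : IsScalarTower (ZMod 2) SteenrodAlgebra H]
  grading : ℕ → Submodule (ZMod 2) H
  isInternal : DirectSum.IsInternal grading
  sq_mem : ∀ (i n : ℕ) (x : H), x ∈ grading n → Sq i • x ∈ grading (n + i)
  instability : ∀ (i n : ℕ) (x : H), x ∈ grading n → n < i → Sq i • x = 0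
  one_mem : (1 : H) ∈ grading 0
  mul_mem : ∀ (m n : ℕ) (x y : H), x ∈ grading m → y ∈ grading n → x * y ∈ grading (m + n)
  cartanH : ∀ (k : ℕ) (x y : H),
    Sq k • (x * y) = ∑ i ∈ Finset.range (k + 1), (Sq i • x) * (Sq (k - i) • y)
  gens : Fin d → H
  gens_deg : ∀ i, gens i ∈ grading 1
  sq_one_gen : ∀ i, Sq 1 • gens i = gens i * gens i
  monomial_indep : LinearIndependent (ZMod 2) (fun e : Fin d → ℕ => ∏ i, gens i ^ e i)
  monomial_span : ⊤ ≤ Submodule.span (ZMod 2) (Set.range fun e : Fin d → ℕ => ∏ i, gens i ^ e i)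
  cV : H
  cV_spec : ∃ s : Finset H, (∀ u, u ∈ s ↔ (u ∈ grading 1 ∧ u ≠ 0)) ∧ cV = ∏ u ∈ s, u

attribute [instance] HVSetup.ring HVSetup.modA HVSetup.modF HVSetup.tower

/-- `H^*V` as an object of `U`. -/
@[reducible] def HVSetup.toUnstable {d : ℕ} (V : HVSetup d) : UnstableModule where
  carrier := V.H
  grading := V.grading
  isInternal := V.isInternal
  sq_mem := V.sq_mem
  instability := V.instability

/-- A representative of an indecomposable direct factor of some `H^*((Z/2)^m)`
(an element of the set `𝓛` of the classification theorems). -/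
def IsIndecInjFactor (L : UnstableModule) : Prop :=
  IndecomposableU L ∧
  ∃ (m : ℕ) (V : HVSetup m) (j : UnstableHom L V.toUnstable)
    (r : UnstableHom V.toUnstable L), ∀ x, r.toFun (j.toFun x) = x

/-- An unstable `H^*V`-`A`-module: an object `E` of `U` together with a compatible
`H^*V`-module structure satisfying the Cartan formula, and the data of the unstable
`A`-module `Ē = F_2 ⊗_{H^*V} E = E / (H̃^*V · E)` with the projection `barπ : E → Ē`. -/
structure HVModule {d : ℕ} (V : HVSetup d) : Type 1 where
  E : UnstableModule
  [modH : Module V.H E.carrier]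
  smul_grading : ∀ (m n : ℕ) (h : V.H) (x : E.carrier),
    h ∈ V.grading m → x ∈ E.grading n → h • x ∈ E.grading (m + n)
  cartan : ∀ (k : ℕ) (h : V.H) (x : E.carrier),
    Sq k • (h • x) = ∑ i ∈ Finset.range (k + 1), (Sq i • h) • (Sq (k - i) • x)
  bar : UnstableModule
  barπ : UnstableHom E bar
  barπ_surj : Function.Surjective barπ.toFun
  barπ_ker : ∀ y : E.carrier, barπ.toFun y = 0 ↔
    y ∈ Submodule.span (ZMod 2)
      {z : E.carrier | ∃ (m : ℕ) (h : V.H) (x : E.carrier),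
        1 ≤ m ∧ h ∈ V.grading m ∧ z = h • x}

attribute [instance] HVModule.modH

/-- Morphisms of `H^*V-U`: `H^*V`-linear and `A`-linear maps of degree zero. -/
structure HVHom {d : ℕ} (V : HVSetup d) (M N : HVModule V) extends UnstableHom M.E N.E where
  map_hsmul : ∀ (h : V.H) (x : M.E.carrier), toFun (h • x) = h • toFun x

/-- `M ≅ N` in the category `H^*V-U`. -/
def HVIso {d : ℕ} {V : HVSetup d} (M N : HVModule V) : Prop :=
  ∃ (f : HVHom V M N) (g : HVHom V N M),
    (∀ x, g.toFun (f.toFun x) = x) ∧ ∀ y, f.toFun (g.toFun y) = y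

/-- `ι : P → T` realizes `T` as `H^*V ⊗ P`, via the universal property: every `A`-linear
map from `P` to an unstable `H^*V`-`A`-module extends uniquely to an `H^*V`-`A`-linear
map from `T`. -/
def IsHVTensor {d : ℕ} (V : HVSetup d) (P : UnstableModule) (T : HVModule V)
    (ι : UnstableHom P T.E) : Prop :=
  ∀ (N : HVModule V) (f : UnstableHom P N.E),
    ∃ g : HVHom V T N, (∀ x, g.toFun (ι.toFun x) = f.toFun x) ∧
      ∀ g' : HVHom V T N, (∀ x, g'.toFun (ι.toFun x) = f.toFun x) →
        ∀ y, g'.toFun y = g.toFun y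

/-- Injective objects of the category `H^*V-U`. -/
def IsInjectiveHVU {d : ℕ} {V : HVSetup d} (I : HVModule V) : Prop :=
  ∀ (M N : HVModule V) (f : HVHom V M N), Function.Injective f.toFun →
    ∀ g : HVHom V M I, ∃ h : HVHom V N I, ∀ x, h.toFun (f.toFun x) = g.toFun x

/-- `i : M ↪ E` exhibits `E` as the injective hull of `M` in `H^*V-U`. -/
def IsInjectiveHullHVU {d : ℕ} {V : HVSetup d} (M E : HVModule V) (i : HVHom V M E) : Prop :=
  IsInjectiveHVU E ∧ Function.Injective i.toFun ∧
  ∀ p : Submodule SteenrodAlgebra E.E.carrier, IsGradedSub E.E p →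
    (∀ (h : V.H) (x : E.E.carrier), x ∈ p → h • x ∈ p) → p ≠ ⊥ →
    ∃ x, x ≠ 0 ∧ x ∈ p ∧ x ∈ Set.range i.toFun

/-- `I` is the direct sum (in `H^*V-U`) of the family `F`. -/
def IsHVDirectSumOf {d : ℕ} {V : HVSetup d} (I : HVModule V) {ι : Type}
    (F : ι → HVModule V) : Prop :=
  letI := Classical.decEq ι
  ∃ j : ∀ i, HVHom V (F i) I,
    Function.Bijective
      (DirectSum.toModule SteenrodAlgebra ι I.E.carrier fun i => (j i).toFun)

/-- `T` realizes `M ⊗_{F_2} L` in `H^*V-U` (with `H^*V` acting on the first factor). -/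
def IsHVTensorWithU {d : ℕ} {V : HVSetup d} (M : HVModule V) (L : UnstableModule)
    (T : HVModule V) : Prop :=
  ∃ β : M.E.carrier →ₗ[ZMod 2] L.carrier →ₗ[ZMod 2] T.E.carrier,
    (∀ (m n : ℕ) (x : M.E.carrier) (y : L.carrier),
      x ∈ M.E.grading m → y ∈ L.grading n → β x y ∈ T.E.grading (m + n)) ∧
    (∀ (k : ℕ) (x : M.E.carrier) (y : L.carrier),
      Sq k • β x y = ∑ i ∈ Finset.range (k + 1), β (Sq i • x) (Sq (k - i) • y)) ∧
    (∀ (h : V.H) (x : M.E.carrier) (y : L.carrier), β (h • x) y = h • β x y) ∧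
    Function.Bijective (TensorProduct.lift β)

/-- A morphism of setups `H^*(V/W) → H^*V` induced by a projection `V → V/W` onto a
quotient by a subgroup `W`: an injective map of unstable `A`-algebras. -/
structure SetupMap {e d : ℕ} (U : HVSetup e) (V : HVSetup d) where
  toHom : UnstableHom U.toUnstable V.toUnstable
  map_one : toHom.toFun 1 = 1
  map_mul : ∀ x y, toHom.toFun (x * y) = toHom.toFun x * toHom.toFun y
  inj : Function.Injective toHom.toFun

/-- `ι : M → T` realizes `T` as the base change `H^*V ⊗_{H^*(V/W)} M` along
`ρ : H^*(V/W) → H^*V`, via the universal property of extension of scalars. -/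
def IsBaseChangeOf {e d : ℕ} {U : HVSetup e} {V : HVSetup d} (ρ : SetupMap U V)
    (M : HVModule U) (T : HVModule V) (ι : UnstableHom M.E T.E) : Prop :=
  (∀ (h : U.H) (x : M.E.carrier), ι.toFun (h • x) = ρ.toHom.toFun h • ι.toFun x) ∧
  ∀ (N : HVModule V) (f : UnstableHom M.E N.E),
    (∀ (h : U.H) (x : M.E.carrier), f.toFun (h • x) = ρ.toHom.toFun h • f.toFun x) →
    ∃ g : HVHom V T N, (∀ x, g.toFun (ι.toFun x) = f.toFun x) ∧
      ∀ g' : HVHom V T N, (∀ x, g'.toFun (ι.toFun x) = f.toFun x) →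
        ∀ y, g'.toFun y = g.toFun y

/-- The Brown-Gitler object `J_V(n)` of `H^*V-U`: it represents `M ↦ (Mⁿ)^∨` on
`H^*V-U`. -/
def IsHVBrownGitler {e : ℕ} (U : HVSetup e) (J : HVModule U) (n : ℕ) : Prop :=
  ∃ Φ : ∀ M : HVModule U, HVHom U M J → (↥(M.E.grading n) →ₗ[ZMod 2] ZMod 2),
    (∀ M, Function.Bijective (Φ M)) ∧
    ∀ (M M' : HVModule U) (f : HVHom U M' M) (g : HVHom U M J)
      (x : ↥(M'.E.grading n)),
      Φ M' ⟨g.toUnstableHom.comp f.toUnstableHom,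
        fun h y => by simp [UnstableHom.comp, f.map_hsmul, g.map_hsmul]⟩ x =
      Φ M g ⟨f.toFun x, f.map_grading n x x.2⟩

/-- The data of `Fix_V N` together with its couniversal property: `Fix_V` is left
adjoint to `H^*V ⊗ -`, and `η : N → H^*V ⊗ Fix_V N` is the unit (the adjoint of the
identity of `Fix_V N`). -/
structure FixData {d : ℕ} (V : HVSetup d) (N : HVModule V) where
  F : UnstableModule
  T : HVModule V
  ι : UnstableHom F T.E
  tensor : IsHVTensor V F T ι
  η : HVHom V N T
  univ : ∀ (P : UnstableModule) (T' : HVModule V) (ι' : UnstableHom P T'.E),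
    IsHVTensor V P T' ι' → ∀ f : HVHom V N T',
    ∃ φ : UnstableHom F P,
      (∀ g : HVHom V T T', (∀ x, g.toFun (ι.toFun x) = ι'.toFun (φ.toFun x)) →
        ∀ y, g.toFun (η.toFun y) = f.toFun y) ∧
      ∀ φ' : UnstableHom F P,
        (∀ g : HVHom V T T', (∀ x, g.toFun (ι.toFun x) = ι'.toFun (φ'.toFun x)) →
          ∀ y, g.toFun (η.toFun y) = f.toFun y) →
        ∀ z, φ'.toFun z = φ.toFun z

/-- `0 → M → I₀ → I₁` is the beginning of a minimal injective resolution in `U`: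
`I₀` is the injective hull of `M` and `I₁` is the injective hull of `I₀/M`. -/
def IsMinResStartU (M I0 I1 : UnstableModule) (e0 : UnstableHom M I0)
    (a : UnstableHom I0 I1) : Prop :=
  IsInjectiveHullU M I0 e0 ∧ IsInjectiveU I1 ∧
  (∀ x, a.toFun x = 0 ↔ x ∈ Set.range e0.toFun) ∧
  ∀ (C : UnstableModule) (q : UnstableHom I0 C), Function.Surjective q.toFun →
    (∀ x, q.toFun x = 0 ↔ x ∈ Set.range e0.toFun) →
    ∀ a' : UnstableHom C I1, (∀ x, a'.toFun (q.toFun x) = a.toFun x) →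
      IsInjectiveHullU C I1 a'

/-- `0 → M → T₀ → T₁` is the beginning of a minimal injective resolution in `H^*V-U`. -/
def IsMinResStartHV {d : ℕ} {V : HVSetup d} (M T0 T1 : HVModule V)
    (e0 : HVHom V M T0) (a : HVHom V T0 T1) : Prop :=
  IsInjectiveHullHVU M T0 e0 ∧ IsInjectiveHVU T1 ∧
  (∀ x, a.toFun x = 0 ↔ x ∈ Set.range e0.toFun) ∧
  ∀ (C : HVModule V) (q : HVHom V T0 C), Function.Surjective q.toFun →
    (∀ x, q.toFun x = 0 ↔ x ∈ Set.range e0.toFun) →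
    ∀ a' : HVHom V C T1, (∀ x, a'.toFun (q.toFun x) = a.toFun x) →
      IsInjectiveHullHVU C T1 a'

/-- `M` is (isomorphic to) the `n`-fold suspension `Σⁿ F_2`: one-dimensional,
concentrated in degree `n`. -/
def IsSphereLike (M : UnstableModule) (n : ℕ) : Prop :=
  (∀ (m : ℕ) (x : M.carrier), x ∈ M.grading m → m ≠ n → x = 0) ∧
  ∃ x, x ∈ M.grading n ∧ x ≠ 0 ∧ ∀ y ∈ M.grading n, y = 0 ∨ y = x

/-- `SM` realizes the suspension `Σ M` in `U`. -/
def IsSuspensionU (M SM : UnstableModule) : Prop :=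
  ∃ s : M.carrier →+ SM.carrier, Function.Bijective s ∧
    (∀ (n : ℕ) (x : M.carrier), x ∈ M.grading n → s x ∈ SM.grading (n + 1)) ∧
    ∀ (k : ℕ) (x : M.carrier), s (Sq k • x) = Sq k • s x

/-- `SM` realizes the suspension `Σ M` in `H^*V-U`. -/
def IsSuspensionHV {d : ℕ} {V : HVSetup d} (M SM : HVModule V) : Prop :=
  ∃ s : M.E.carrier →+ SM.E.carrier, Function.Bijective s ∧
    (∀ (n : ℕ) (x : M.E.carrier), x ∈ M.E.grading n → s x ∈ SM.E.grading (n + 1)) ∧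
    (∀ (k : ℕ) (x : M.E.carrier), s (Sq k • x) = Sq k • s x) ∧
    ∀ (h : V.H) (x : M.E.carrier), s (h • x) = h • s x

/-- `M` realizes `Σ^dd (u · H^*V)`, the `dd`-fold suspension of the principal ideal
generated by a homogeneous element `u` of degree `du` (an unstable `H^*V`-`A`-submodule
of `H^*V` since `u` is a product of linear forms): the witness `f` sends `h` to
`Σ^dd (u·h)`. -/
def IsSuspensionOfPrincipalIdeal {d : ℕ} (V : HVSetup d) (M : HVModule V)
    (dd du : ℕ) (u : V.H) : Prop :=
  u ∈ V.grading du ∧ u ≠ 0 ∧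
  ∃ f : V.H →+ M.E.carrier,
    Function.Bijective f ∧
    (∀ (h h' : V.H), f (h' * h) = h' • f h) ∧
    (∀ (m : ℕ) (h : V.H), h ∈ V.grading m → f h ∈ M.E.grading (dd + du + m)) ∧
    ∀ (k : ℕ) (h h' : V.H), Sq k • (u * h) = u * h' → Sq k • f h = f h'

/-- A `V`-CW-complex, recorded through its mod 2 cohomology `H^*X`, its mod 2
equivariant cohomology `H^*_V X` (the cohomology of the Borel construction, an
unstable `H^*V`-`A`-module) and the restriction map `H^*_V X → H^*X` to the fibre of
`X → X_{hV} → BV`.  The field `collapse_of_free` records the classical topological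
fact that if `H^*_V X` is `H^*V`-free then the Serre spectral sequence collapses, so
that the restriction map identifies `F_2 ⊗_{H^*V} H^*_V X` with `H^*X`. -/
structure VCWComplex {d : ℕ} (V : HVSetup d) : Type 1 where
  cohomology : UnstableModule
  equivariantCohomology : HVModule V
  restriction : UnstableHom equivariantCohomology.E cohomology
  restriction_hsmul : ∀ (m : ℕ) (h : V.H) (x : equivariantCohomology.E.carrier),
    1 ≤ m → h ∈ V.grading m → restriction.toFun (h • x) = 0
  collapse_of_free : Module.Free V.H equivariantCohomology.E.carrier →
    Function.Surjective restriction.toFun ∧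
    ∀ y, restriction.toFun y = 0 ↔ equivariantCohomology.barπ.toFun y = 0

end

/-!
If `Sq₀` is injective then so are its iterates, and a nilpotent graded submodule has no
non-zero homogeneous element. Conversely, the homogeneous elements killed by `Sq₀` span over
`F₂` a submodule that is already stable under every `Sq^i`, hence under `A`; it is graded, and
nilpotent because comparing homogeneous components shows that `Sq₀` kills each of its
homogeneous elements. If no non-trivial such submodule exists, it is zero, i.e. `Sq₀` is
injective.
-/

namespace SteenrodAlgebra

theorem Sq_zero : Sq 0 = 1 := by
  simpa [Sq] using RingQuot.mkAlgHom_rel (ZMod 2) AdemRel.unit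

theorem Sq_mul_Sq {a b : ℕ} (ha : 0 < a) (hab : a < 2 * b) :
    Sq a * Sq b = ∑ c ∈ Finset.range (a / 2 + 1),
      ((Nat.choose (b - c - 1) (a - 2 * c) : ZMod 2)) • (Sq (a + b - c) * Sq c) := by
  simpa [Sq] using RingQuot.mkAlgHom_rel (ZMod 2) (AdemRel.adem a b ha hab)

theorem adjoin_range_Sq : Algebra.adjoin (ZMod 2) (Set.range Sq) = ⊤ := by
  have hSq : Set.range Sq =
      RingQuot.mkAlgHom (ZMod 2) AdemRel '' Set.range (FreeAlgebra.ι (ZMod 2)) := by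
    rw [← Set.range_comp]; rfl
  rw [hSq, ← AlgHom.map_adjoin, FreeAlgebra.adjoin_range_ι, Algebra.map_top,
    AlgHom.range_eq_top]
  exact RingQuot.mkAlgHom_surjective (ZMod 2) AdemRel

theorem smul_mem_of_forall_Sq_smul_mem {X : Type*} [AddCommGroup X] [Module SteenrodAlgebra X]
    [Module (ZMod 2) X] [IsScalarTower (ZMod 2) SteenrodAlgebra X] (N : Submodule (ZMod 2) X)
    (hN : ∀ i, ∀ z ∈ N, Sq i • z ∈ N) (a : SteenrodAlgebra) : ∀ z ∈ N, a • z ∈ N := by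
  have ha : a ∈ Algebra.adjoin (ZMod 2) (Set.range Sq) := adjoin_range_Sq ▸ trivial
  induction ha using Algebra.adjoin_induction with
  | mem b hb => obtain ⟨i, rfl⟩ := hb; exact hN i
  | algebraMap r => intro z hz; rw [algebraMap_smul]; exact N.smul_mem r hz
  | add b c _ _ hb hc => intro z hz; rw [add_smul]; exact N.add_mem (hb z hz) (hc z hz)
  | mul b c _ _ hb hc => intro z hz; rw [mul_smul]; exact hb _ (hc z hz)

end SteenrodAlgebra

open SteenrodAlgebra

namespace UnstableModule

variable (M : UnstableModule)

theorem sq0Iter_mem_grading {n : ℕ} {x : M.carrier} (hx : x ∈ M.grading n) (k : ℕ) :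
    sq0Iter M k n x ∈ M.grading (2 ^ k * n) := by
  induction k with
  | zero => simpa [sq0Iter] using hx
  | succ k ih =>
    show Sq (2 ^ k * n) • sq0Iter M k n x ∈ _
    convert M.sq_mem (2 ^ k * n) _ _ ih using 2; ring

theorem eq_zero_of_sq0Iter_eq_zero (hM : IsReducedU M) {n : ℕ} {x : M.carrier}
    (hx : x ∈ M.grading n) {k : ℕ} (hk : sq0Iter M k n x = 0) : x = 0 := by
  induction k with
  | zero => exact hk
  | succ k ih => exact ih (hM _ _ (M.sq0Iter_mem_grading hx k) hk)

/-- `Sq^{m+i} Sq^i = Sq^{2i} Sq^m + (terms Sq^{2i+m-c} Sq^c with c < i)` by the Adem relation,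
and the extra terms vanish on `M^m` by instability. -/
theorem Sq_add_smul_Sq_smul_eq_zero {m : ℕ} {z : M.carrier} (hz : z ∈ M.grading m)
    (h0 : Sq m • z = 0) (i : ℕ) : Sq (m + i) • Sq i • z = 0 := by
  rcases Nat.eq_zero_or_pos i with rfl | hi
  · simpa [Sq_zero] using h0
  rcases lt_trichotomy i m with him | rfl | him
  · have hadem : (Sq (2 * i) * Sq m) • z = 0 := by rw [mul_smul, h0, smul_zero]
    have hdiv : 2 * i / 2 = i := by omega
    rw [Sq_mul_Sq (by omega) (by omega), Finset.sum_smul, hdiv,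
      Finset.sum_eq_single_of_mem i (Finset.self_mem_range_succ i)] at hadem
    · simpa [mul_smul, show 2 * i + m - i = m + i by omega] using hadem
    · intro c hc hne
      have hci : c < i := by have := Finset.mem_range.mp hc; omega
      rw [smul_assoc, mul_smul, M.instability _ (m + c) _ (M.sq_mem c m z hz) (by omega),
        smul_zero]
  · rw [h0, smul_zero]
  · rw [M.instability i m z hz him, smul_zero]

def sq0KerSpan : Submodule SteenrodAlgebra M.carrier where
  __ := Submodule.span (ZMod 2) {z | ∃ m, z ∈ M.grading m ∧ Sq m • z = 0}
  smul_mem' a := by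
    refine smul_mem_of_forall_Sq_smul_mem (Submodule.span (ZMod 2) _) (fun i z hz => ?_) a _
    induction hz using Submodule.span_induction with
    | mem w hw =>
      obtain ⟨m, hwm, hw0⟩ := hw
      exact Submodule.subset_span
        ⟨m + i, M.sq_mem i m w hwm, M.Sq_add_smul_Sq_smul_eq_zero hwm hw0 i⟩
    | zero => simp
    | add u v _ _ hu hv => rw [smul_add]; exact Submodule.add_mem _ hu hv
    | smul c u _ hu => rw [smul_comm]; exact Submodule.smul_mem _ c hu

theorem isGradedSub_sq0KerSpan : IsGradedSub M M.sq0KerSpan := by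
  refine fun _ hy => Submodule.span_mono ?_ hy
  rintro z ⟨n, hzn, hz0⟩
  exact ⟨Submodule.subset_span ⟨n, hzn, hz0⟩, Set.mem_iUnion.mpr ⟨n, hzn⟩⟩

theorem Sq_smul_eq_zero_of_mem_sq0KerSpan {m : ℕ} {y : M.carrier} (hy : y ∈ M.sq0KerSpan)
    (hym : y ∈ M.grading m) : Sq m • y = 0 := by
  let := M.isInternal.chooseDecomposition
  suffices h : ∀ j, Sq j • (DirectSum.decompose M.grading y j : M.carrier) = 0 by
    simpa [DirectSum.decompose_of_mem_same _ hym] using h m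
  clear hym
  induction hy using Submodule.span_induction with
  | mem w hw =>
    obtain ⟨m', hwm', hw0⟩ := hw
    intro j
    rcases eq_or_ne m' j with rfl | hne
    · rwa [DirectSum.decompose_of_mem_same _ hwm']
    · rw [DirectSum.decompose_of_mem_ne _ hwm' hne, smul_zero]
  | zero => simp
  | add u v _ _ hu hv =>
    intro j
    rw [DirectSum.decompose_add, DirectSum.add_apply, Submodule.coe_add, smul_add, hu, hv,
      add_zero]
  | smul c u _ hu =>
    intro j
    rw [DirectSum.decompose_smul, DirectSum.smul_apply, Submodule.coe_smul, smul_comm, hu,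
      smul_zero]

theorem eq_bot_of_isGradedSub {p : Submodule SteenrodAlgebra M.carrier} (hp : IsGradedSub M p)
    (h : ∀ (n : ℕ) (x : M.carrier), x ∈ p → x ∈ M.grading n → x = 0) : p = ⊥ := by
  refine (Submodule.eq_bot_iff p).mpr fun y hy => ?_
  have hzero : (p : Set M.carrier) ∩ ⋃ n, (M.grading n : Set M.carrier) ⊆ {0} := by
    rintro z ⟨hzp, hz⟩
    obtain ⟨n, hzn⟩ := Set.mem_iUnion.mp hz
    exact h n z hzp hzn
  simpa using Submodule.span_mono hzero (hp y hy)

end UnstableModule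

/-- Lemma 2.2.1.  An unstable `A`-module is reduced if and only if it
contains no non-trivial nilpotent unstable `A`-submodule. -/
theorem reduced_iff_no_nilpotent_submodule (M : UnstableModule) :
    IsReducedU M ↔
    ∀ p : Submodule SteenrodAlgebra M.carrier, IsGradedSub M p →
      (∀ (n : ℕ) (x : M.carrier), x ∈ p → x ∈ M.grading n → ∃ k, sq0Iter M k n x = 0) →
      p = ⊥ := by
  constructor
  · intro hM p hp hnil
    refine M.eq_bot_of_isGradedSub hp fun n x hxp hxn => ?_
    obtain ⟨k, hk⟩ := hnil n x hxp hxn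
    exact M.eq_zero_of_sq0Iter_eq_zero hM hxn hk
  · intro h n x hxn hx0
    have hbot : M.sq0KerSpan = ⊥ := h _ M.isGradedSub_sq0KerSpan fun m y hy hym =>
      ⟨1, by simpa [sq0Iter] using M.Sq_smul_eq_zero_of_mem_sq0KerSpan hy hym⟩
    have hx : x ∈ M.sq0KerSpan := Submodule.subset_span ⟨n, hxn, hx0⟩
    simpa [hbot] using hx
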